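/- arXiv:1504.01872 — 3 statements merged into one kernel-verified Lean document; each statement's English description precedes it below -/
import Mathlib

section
/- Let t ∈ [0,T], ω ∈ Ω and s ∈ [t,T]. If τ : Ω → [0,T] is a stopping time of the canonical filtration (i.e. {ω'' : τ(ω'') ≤ u} ∈ ℱ_u for every u ∈ [0,T]) taking values in [t,s], then the map ω' ↦ τ(ω ⊗_t ω') − t is a stopping time of the canonical filtration (ℱ_u) taking values in [0, s−t]. -/
open MeasureTheory

noncomputable section

/-- The path space `Ω`: continuous paths `ℝ → ℝ^d` starting from the origin
(only their restriction to `[0,T]` is relevant). -/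
abbrev PathR (d : ℕ) := {ω : ℝ → EuclideanSpace ℝ (Fin d) // Continuous ω ∧ ω 0 = 0}

/-- The canonical filtration: `ℱ_u` is generated by the coordinate maps `ω ↦ ω_s`, `s ∈ [0,u]`. -/
def filtr (d : ℕ) (u : ℝ) : MeasurableSpace (PathR d) :=
  ⨆ s ∈ Set.Icc (0 : ℝ) u,
    MeasurableSpace.comap (fun ω : PathR d => ω.1 s) inferInstance

/-- The concatenated path `ω ⊗_t ω'`: equals `ω` on `[0,t]` and `ω_t + ω'_{s−t}` for `s > t`. -/
def concat (d : ℕ) (t : ℝ) (ht : 0 ≤ t) (ω ω' : PathR d) : PathR d :=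
  ⟨fun s => ω.1 (min s t) + ω'.1 (max (s - t) 0),
   ⟨(ω.2.1.comp (continuous_id.min continuous_const)).add
      (ω'.2.1.comp ((continuous_id.sub continuous_const).max continuous_const)),
    by
      have h1 : max ((0 : ℝ) - t) 0 = 0 := max_eq_right (by linarith)
      have h2 : min (0 : ℝ) t = 0 := min_eq_left ht
      simp only [h2, h1, ω.2.2, ω'.2.2, add_zero]⟩⟩

/- Coordinate `r ≤ t + u` of `ω ⊗_t ω'` depends only on coordinate `max (r - t) 0 ≤ u` of `ω'`,
so concatenation with a fixed `ω` is `ℱ_u / ℱ_{t+u}`-measurable and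
`{τ(ω ⊗_t ·) - t ≤ u}` is the preimage of `{τ ≤ t + u} ∈ ℱ_{t+u}`. When `t + u > T`
the stopping property of `τ` is not available, but then the set is all of `Ω` since `τ ≤ s ≤ T`. -/

namespace PathR

variable {d : ℕ}

theorem measurable_eval_filtr {u r : ℝ} (hr : r ∈ Set.Icc 0 u) :
    Measurable[filtr d u] (fun ω : PathR d => ω.1 r) :=
  measurable_iff_comap_le.mpr <|
    le_iSup₂ (f := fun r (_ : r ∈ Set.Icc (0 : ℝ) u) =>
      MeasurableSpace.comap (fun ω : PathR d => ω.1 r) inferInstance) r hr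

theorem measurable_to_filtr {α : Type*} {m : MeasurableSpace α} {u : ℝ} {f : α → PathR d}
    (hf : ∀ r ∈ Set.Icc 0 u, Measurable (fun a => (f a).1 r)) :
    Measurable[m, filtr d u] f := by
  rw [measurable_iff_comap_le, filtr, MeasurableSpace.comap_iSup]
  refine iSup_le fun r => ?_
  rw [MeasurableSpace.comap_iSup]
  exact iSup_le fun hr => by rw [MeasurableSpace.comap_comp]; exact (hf r hr).comap_le

theorem measurable_concat {t u : ℝ} (ht : 0 ≤ t) (hu : 0 ≤ u) (ω : PathR d) :
    Measurable[filtr d u, filtr d (t + u)] (concat d t ht ω) := by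
  refine measurable_to_filtr (m := filtr d u) fun r hr => ?_
  have hr' : max (r - t) 0 ∈ Set.Icc 0 u :=
    ⟨le_max_right _ _, max_le (by linarith [hr.2]) hu⟩
  exact measurable_const.add (measurable_eval_filtr hr')

end PathR

theorem stmt_3_general (T : ℝ) (d : ℕ)
    (t s : ℝ) (ht : 0 ≤ t) (hsT : s ≤ T) (ω : PathR d)
    (τ : PathR d → ℝ)
    (hτ_stop : ∀ u ∈ Set.Icc (0 : ℝ) T, MeasurableSet[filtr d u] {ω'' : PathR d | τ ω'' ≤ u})
    (hτ_range : ∀ ω'' : PathR d, τ ω'' ∈ Set.Icc t s) :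
    (∀ ω' : PathR d, τ (concat d t ht ω ω') - t ∈ Set.Icc 0 (s - t)) ∧
    (∀ u ∈ Set.Icc (0 : ℝ) T,
      MeasurableSet[filtr d u] {ω' : PathR d | τ (concat d t ht ω ω') - t ≤ u}) := by
  refine ⟨fun ω' => ?_, fun u hu => ?_⟩
  · obtain ⟨h₁, h₂⟩ := hτ_range (concat d t ht ω ω')
    exact ⟨by linarith, by linarith⟩
  by_cases htu : t + u ≤ T
  · have hset : {ω' : PathR d | τ (concat d t ht ω ω') - t ≤ u}
        = concat d t ht ω ⁻¹' {ω'' | τ ω'' ≤ t + u} :=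
      Set.ext fun _ => show _ - t ≤ u ↔ _ ≤ t + u from sub_le_iff_le_add'
    rw [hset]
    exact PathR.measurable_concat ht hu.1 ω (hτ_stop (t + u) ⟨by linarith [hu.1], htu⟩)
  · convert MeasurableSet.univ
    refine Set.eq_univ_of_forall fun ω' => show _ - t ≤ u from ?_
    linarith [(hτ_range (concat d t ht ω ω')).2]

/-- if `τ` is a stopping time of the canonical filtration taking values
in `[t,s]` (with `0 ≤ t ≤ s ≤ T`), then `ω' ↦ τ(ω ⊗_t ω') − t` is a stopping time of
the canonical filtration taking values in `[0, s−t]`. -/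
theorem stmt_3 (T : ℝ) (hT : 0 < T) (d : ℕ) (hd : 1 ≤ d)
    (t s : ℝ) (ht : 0 ≤ t) (hts : t ≤ s) (hsT : s ≤ T) (ω : PathR d)
    (τ : PathR d → ℝ)
    (hτ_stop : ∀ u ∈ Set.Icc (0 : ℝ) T, MeasurableSet[filtr d u] {ω'' : PathR d | τ ω'' ≤ u})
    (hτ_range : ∀ ω'' : PathR d, τ ω'' ∈ Set.Icc t s) :
    (∀ ω' : PathR d, τ (concat d t ht ω ω') - t ∈ Set.Icc 0 (s - t)) ∧
    (∀ u ∈ Set.Icc (0 : ℝ) T,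
      MeasurableSet[filtr d u] {ω' : PathR d | τ (concat d t ht ω ω') - t ≤ u}) :=
  stmt_3_general T d t s ht hsT ω τ hτ_stop hτ_range
end
end

section
/- (Consistency of the explicit finite-difference scheme.) Let G : [0,T]×Ω×ℝ×ℝ×ℝ → ℝ be continuous with respect to the product of the Dupire pseudo-distance on [0,T]×Ω and the Euclidean metric on ℝ³, fix λ > 0, and let φ : [0,T]×ℝ → ℝ be continuous with continuous partial derivatives ∂_tφ, ∂_xφ, ∂²_{xx}φ. Fix (t,ω) ∈ [0,T)×Ω. For parameters t' ∈ [t,T), h ∈ (0, T−t'], ω' ∈ Ω and c ∈ ℝ, set Δx := λ√h, ω̃ := ω ⊗_t ω', x̃ := ω̃_{t'}, and define 𝕋(t',ω',h,c) := φ(t'+h, x̃) + c + h·G( t', ω̃, φ(t'+h,x̃) + c, [φ(t'+h, x̃+Δx) − φ(t'+h, x̃)]/Δx, [φ(t'+h, x̃+Δx) − 2φ(t'+h, x̃) + φ(t'+h, x̃−Δx)]/Δx² ). Then the difference quotient [ φ(t', x̃) + c − 𝕋(t',ω',h,c) ] / h converges to −∂_tφ(t, ω_t) − G( t, ω, φ(t,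 ω_t), ∂_xφ(t, ω_t), ∂²_{xx}φ(t, ω_t) ) as (t'−t) + ‖ω'‖ + h + |c| → 0; precisely, for every ε' > 0 there exists δ > 0 such that the quotient differs from this limit by at most ε' whenever t' ∈ [t,T), h ∈ (0,T−t'], and (t'−t) + ‖ω'‖ + h + |c| ≤ δ. -/
noncomputable section

/-- The path space `Ω`: continuous real paths starting from `0`
(only their restriction to `[0,T]` is relevant). -/
abbrev Path1 := {ω : ℝ → ℝ // Continuous ω ∧ ω 0 = 0}

/-- The uniform norm over `[0,T]`: `‖f‖ = sup_{0 ≤ s ≤ T} |f s|`. -/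
def supNorm (T : ℝ) (f : ℝ → ℝ) : ℝ := ⨆ s : Set.Icc (0 : ℝ) T, |f s.1|

/-- The stopped path `ω_{t∧·} : s ↦ ω_{t ∧ s}`. -/
def stopPath (ω : Path1) (t : ℝ) (ht : 0 ≤ t) : Path1 :=
  ⟨fun s => ω.1 (min t s),
   ⟨ω.2.1.comp (continuous_const.min continuous_id),
    by
      have h1 : min t (0 : ℝ) = 0 := min_eq_right ht
      simp only [h1, ω.2.2]⟩⟩

/-- The path `ω ⊗_t^h x`: equal to `ω` on `[0,t]`, to `ω_t + x (s−t)/h` on `[t, t+h]`,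
and to `ω_t + x` on `[t+h, ∞)`. -/
def bumpPath (ω : Path1) (t h x : ℝ) (ht : 0 ≤ t) (hh : 0 < h) : Path1 :=
  ⟨fun s => ω.1 (min t s) + x * min (max ((s - t) / h) 0) 1,
   ⟨(ω.2.1.comp (continuous_const.min continuous_id)).add
      (continuous_const.mul
        ((((continuous_id.sub continuous_const).div_const h).max continuous_const).min
          continuous_const)),
    by
      have h0 : ((0 : ℝ) - t) / h ≤ 0 :=
        div_nonpos_iff.mpr (Or.inr ⟨by linarith, hh.le⟩)
      have h1 : max (((0 : ℝ) - t) / h) 0 = 0 := max_eq_right h0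
      have h2 : min t (0 : ℝ) = 0 := min_eq_right ht
      simp only [h2, h1, ω.2.2, min_eq_left zero_le_one, mul_zero, add_zero]⟩⟩

/-- The discrete derivative `𝒟⁰_h ψ(t,ω) = ψ(ω_{t∧·})`. -/
def D0 (ψ : Path1 → ℝ) (t : ℝ) (ht : 0 ≤ t) (ω : Path1) : ℝ := ψ (stopPath ω t ht)

/-- The discrete derivative `𝒟¹_h ψ(t,ω) = [ψ(ω ⊗_t^h Δx) − ψ(ω_{t∧·})]/Δx`. -/
def D1 (ψ : Path1 → ℝ) (t h dx : ℝ) (ht : 0 ≤ t) (hh : 0 < h) (ω : Path1) : ℝ :=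
  (ψ (bumpPath ω t h dx ht hh) - ψ (stopPath ω t ht)) / dx

/-- The discrete derivative
`𝒟²_h ψ(t,ω) = [ψ(ω ⊗_t^h Δx) − 2ψ(ω_{t∧·}) + ψ(ω ⊗_t^h (−Δx))]/Δx²`. -/
def D2 (ψ : Path1 → ℝ) (t h dx : ℝ) (ht : 0 ≤ t) (hh : 0 < h) (ω : Path1) : ℝ :=
  (ψ (bumpPath ω t h dx ht hh) - 2 * ψ (stopPath ω t ht) + ψ (bumpPath ω t h (-dx) ht hh)) / dx ^ 2

/-- The concatenated path `ω ⊗_t ω'`: equals `ω` on `[0,t]` and `ω_t + ω'_{s−t}` for `s > t`. -/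
def concat1 (t : ℝ) (ht : 0 ≤ t) (ω ω' : Path1) : Path1 :=
  ⟨fun s => ω.1 (min s t) + ω'.1 (max (s - t) 0),
   ⟨(ω.2.1.comp (continuous_id.min continuous_const)).add
      (ω'.2.1.comp ((continuous_id.sub continuous_const).max continuous_const)),
    by
      have h1 : max ((0 : ℝ) - t) 0 = 0 := max_eq_right (by linarith)
      have h2 : min (0 : ℝ) t = 0 := min_eq_left ht
      simp only [h2, h1, ω.2.2, ω'.2.2, add_zero]⟩⟩

/-! By the mean value theorem, the one-step quotient equals
`-∂_tφ(ξ, x̃) - G(t', ω̃, φ(t'+h, x̃) + c, ∂_xφ(t'+h, ξ₁), ∂²_{xx}φ(t'+h, ξ₂))` for intermediate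
points `ξ, ξ₁, ξ₂`, all of which lie within `(t'-t) + ‖ω'‖ + h + λ√h` of `(t, ω_t)`.
Continuity of the derivatives of `φ` and of `G` (the Dupire distance from `(t, ω)` to
`(t', ω ⊗_t ω')` is at most `(t'-t) + ‖ω'‖`) then gives the limit. -/

open Set Filter Topology

theorem supNorm_nonneg (T : ℝ) (f : ℝ → ℝ) : 0 ≤ supNorm T f :=
  Real.iSup_nonneg fun _ => abs_nonneg _

theorem abs_le_supNorm {T : ℝ} {f : ℝ → ℝ} (hf : Continuous f) {s : ℝ} (hs : s ∈ Icc 0 T) :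
    |f s| ≤ supNorm T f := by
  have hbdd := isCompact_Icc.bddAbove_image (hf.abs.continuousOn (s := Icc 0 T))
  rw [image_eq_range] at hbdd
  exact le_ciSup hbdd ⟨s, hs⟩

theorem concat1_apply_of_le {t : ℝ} (ht : 0 ≤ t) (ω ω' : Path1) {s : ℝ} (hts : t ≤ s) :
    (concat1 t ht ω ω').1 s = ω.1 t + ω'.1 (s - t) := by
  simp [concat1, min_eq_right hts, max_eq_left (sub_nonneg.2 hts)]

theorem supNorm_stopPath_sub_concat1_le {T t t' : ℝ} (ht : 0 ≤ t) (htt' : t ≤ t')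
    (ω ω' : Path1) :
    supNorm T (fun s => ω.1 (min t s) - (concat1 t ht ω ω').1 (min t' s)) ≤ supNorm T ω'.1 := by
  refine Real.iSup_le (fun ⟨s, hs⟩ => ?_) (supNorm_nonneg T _)
  have hconcat : (concat1 t ht ω ω').1 (min t' s)
      = ω.1 (min t s) + ω'.1 (max (min t' s - t) 0) := by
    show ω.1 (min (min t' s) t) + _ = _
    rw [min_assoc, min_comm s t, min_eq_right ((min_le_left t s).trans htt')]
  show |ω.1 (min t s) - (concat1 t ht ω ω').1 (min t' s)| ≤ _
  rw [hconcat, sub_add_cancel_left, abs_neg]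
  exact abs_le_supNorm ω'.2.1
    ⟨le_max_right _ _, max_le (by linarith [min_le_right t' s, hs.2]) (hs.1.trans hs.2)⟩

theorem exists_mem_Ioo_slope_eq {f f' : ℝ → ℝ} (hf : ∀ x, HasDerivAt f (f' x) x) (a : ℝ)
    {d : ℝ} (hd : 0 < d) : ∃ ξ ∈ Ioo a (a + d), (f (a + d) - f a) / d = f' ξ := by
  obtain ⟨ξ, hξ, hslope⟩ := exists_hasDerivAt_eq_slope f f' (lt_add_of_pos_right a hd)
    (fun x _ => (hf x).continuousAt.continuousWithinAt) (fun x _ => hf x)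
  exact ⟨ξ, hξ, by rw [hslope, add_sub_cancel_left]⟩

theorem exists_mem_Ioo_secondDifference_eq {f f' f'' : ℝ → ℝ}
    (hf : ∀ x, HasDerivAt f (f' x) x) (hf' : ∀ x, HasDerivAt f' (f'' x) x) (a : ℝ)
    {d : ℝ} (hd : 0 < d) :
    ∃ ξ ∈ Ioo (a - d) (a + d), (f (a + d) - 2 * f a + f (a - d)) / d ^ 2 = f'' ξ := by
  -- the second difference is a first difference of `u ↦ f (u + d) - f u`
  have hshift : ∀ x, HasDerivAt (fun u => f (u + d) - f u) (f' (x + d) - f' x) x :=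
    fun x => ((hf (x + d)).comp_add_const x d).sub (hf x)
  obtain ⟨η, hη, hslope⟩ := exists_mem_Ioo_slope_eq hshift (a - d) hd
  obtain ⟨ξ, hξ, hslope'⟩ := exists_mem_Ioo_slope_eq hf' η hd
  refine ⟨ξ, ⟨hη.1.trans hξ.1, by linarith [hξ.2, hη.2]⟩, ?_⟩
  rw [sub_add_cancel] at hslope
  rw [← hslope', ← hslope]
  field_simp
  ring

theorem ContinuousAt.eventually_abs_sub_lt {X : Type*} [TopologicalSpace X] {F : X → ℝ} {x : X}
    (hF : ContinuousAt F x) {ε : ℝ} (hε : 0 < ε) : ∀ᶠ y in 𝓝 x, |F x - F y| < ε := by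
  filter_upwards [Metric.tendsto_nhds.mp hF ε hε] with y hy
  rwa [Real.dist_eq, abs_sub_comm] at hy

theorem exists_forall_finiteDifferences_near {φ φt φx φxx : ℝ → ℝ → ℝ}
    (hφc : Continuous fun p : ℝ × ℝ => φ p.1 p.2)
    (hφt : ∀ t x, HasDerivAt (fun r => φ r x) (φt t x) t)
    (hφtc : Continuous fun p : ℝ × ℝ => φt p.1 p.2)
    (hφx : ∀ t x, HasDerivAt (fun r => φ t r) (φx t x) x)
    (hφxc : Continuous fun p : ℝ × ℝ => φx p.1 p.2)
    (hφxx : ∀ t x, HasDerivAt (fun r => φx t r) (φxx t x) x)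
    (hφxxc : Continuous fun p : ℝ × ℝ => φxx p.1 p.2) (t₀ x₀ : ℝ) {ε : ℝ} (hε : 0 < ε) :
    ∃ δ > 0, ∀ s x h d : ℝ, 0 < h → 0 < d → |s - t₀| + h + |x - x₀| + d < δ →
      |φ t₀ x₀ - φ (s + h) x| < ε ∧
      |φt t₀ x₀ - (φ (s + h) x - φ s x) / h| < ε ∧
      |φx t₀ x₀ - (φ (s + h) (x + d) - φ (s + h) x) / d| < ε ∧
      |φxx t₀ x₀ - (φ (s + h) (x + d) - 2 * φ (s + h) x + φ (s + h) (x - d)) / d ^ 2| < ε := by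
  obtain ⟨δ, hδ, hnear⟩ := Metric.eventually_nhds_iff.mp <|
    (hφc.continuousAt.eventually_abs_sub_lt hε).and <|
    (hφtc.continuousAt.eventually_abs_sub_lt hε).and <|
    (hφxc.continuousAt.eventually_abs_sub_lt hε).and
    ((hφxxc.continuousAt (x := (t₀, x₀))).eventually_abs_sub_lt hε)
  have hnear' : ∀ r y, |r - t₀| < δ → |y - x₀| < δ → _ := fun r y hr hy =>
    @hnear (r, y) (by rw [Prod.dist_eq, Real.dist_eq, Real.dist_eq]; exact max_lt hr hy)
  refine ⟨δ, hδ, fun s x h d hh hd hsum => ?_⟩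
  obtain ⟨ξ, hξ, hslope⟩ := exists_mem_Ioo_slope_eq (hφt · x) s hh
  obtain ⟨ξ₁, hξ₁, hD1⟩ := exists_mem_Ioo_slope_eq (hφx (s + h)) x hd
  obtain ⟨ξ₂, hξ₂, hD2⟩ := exists_mem_Ioo_secondDifference_eq (hφx (s + h)) (hφxx (s + h)) x hd
  rw [hslope, hD1, hD2]
  have := neg_abs_le (s - t₀); have := le_abs_self (s - t₀)
  have := neg_abs_le (x - x₀); have := le_abs_self (x - x₀)
  refine ⟨(hnear' (s + h) x ?_ ?_).1, (hnear' ξ x ?_ ?_).2.1, (hnear' (s + h) ξ₁ ?_ ?_).2.2.1,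
    (hnear' (s + h) ξ₂ ?_ ?_).2.2.2⟩ <;>
  exact abs_sub_lt_iff.mpr ⟨by linarith [hξ.1, hξ.2, hξ₁.1, hξ₁.2, hξ₂.1, hξ₂.2],
    by linarith [hξ.1, hξ.2, hξ₁.1, hξ₁.2, hξ₂.1, hξ₂.2]⟩

theorem eventually_add_mul_sqrt_lt (lam : ℝ) {η : ℝ} (hη : 0 < η) :
    ∀ᶠ ρ in 𝓝[>] 0, ρ + lam * √ρ < η := by
  have hcont : Tendsto (fun ρ => ρ + lam * √ρ) (𝓝 0) (𝓝 0) :=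
    (by fun_prop : Continuous fun ρ : ℝ => ρ + lam * √ρ).tendsto' 0 0 (by simp)
  exact nhdsWithin_le_nhds (hcont.eventually (eventually_lt_nhds hη))

theorem stmt_14_general (T lam : ℝ) (hlam : 0 < lam)
    (G : ℝ → Path1 → ℝ → ℝ → ℝ → ℝ)
    -- continuity of `G` w.r.t. the Dupire pseudo-distance and the Euclidean metric:
    (hGcont : ∀ (t : ℝ) (ω : Path1) (y z γ : ℝ), 0 ≤ t → t ≤ T →
      ∀ ε > (0 : ℝ), ∃ δ > (0 : ℝ), ∀ (t' : ℝ) (ω' : Path1) (y' z' γ' : ℝ),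
        0 ≤ t' → t' ≤ T →
        |t - t'| + (supNorm T fun s => ω.1 (min t s) - ω'.1 (min t' s))
            + |y - y'| + |z - z'| + |γ - γ'| < δ →
        |G t ω y z γ - G t' ω' y' z' γ'| < ε)
    -- `φ` is `C^{1,2}`: continuous, with continuous partial derivatives `φt, φx, φxx`:
    (φ φt φx φxx : ℝ → ℝ → ℝ)
    (hφc : Continuous fun p : ℝ × ℝ => φ p.1 p.2)
    (hφt : ∀ t x, HasDerivAt (fun r => φ r x) (φt t x) t)
    (hφtc : Continuous fun p : ℝ × ℝ => φt p.1 p.2)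
    (hφx : ∀ t x, HasDerivAt (fun r => φ t r) (φx t x) x)
    (hφxc : Continuous fun p : ℝ × ℝ => φx p.1 p.2)
    (hφxx : ∀ t x, HasDerivAt (fun r => φx t r) (φxx t x) x)
    (hφxxc : Continuous fun p : ℝ × ℝ => φxx p.1 p.2)
    (t : ℝ) (ω : Path1) (ht : 0 ≤ t) (htT : t < T) :
    ∀ ε' > (0 : ℝ), ∃ δ > (0 : ℝ),
      ∀ (t' h c : ℝ) (ω' : Path1),
        t ≤ t' → t' < T → 0 < h → h ≤ T - t' →
        (t' - t) + supNorm T ω'.1 + h + |c| ≤ δ →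
        -- with `ω̃ = ω ⊗_t ω'`, `x̃ = ω̃_{t'}`, `Δx = lam √h`:
        ∀ xt dx : ℝ, xt = (concat1 t ht ω ω').1 t' → dx = lam * Real.sqrt h →
        |(φ t' xt + c
            - (φ (t' + h) xt + c
               + h * G t' (concat1 t ht ω ω') (φ (t' + h) xt + c)
                   ((φ (t' + h) (xt + dx) - φ (t' + h) xt) / dx)
                   ((φ (t' + h) (xt + dx) - 2 * φ (t' + h) xt + φ (t' + h) (xt - dx))
                     / dx ^ 2))) / h
          - (-(φt t (ω.1 t))
             - G t ω (φ t (ω.1 t)) (φx t (ω.1 t)) (φxx t (ω.1 t)))| ≤ ε' := by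
  intro ε hε
  obtain ⟨δG, hδG, hG⟩ := hGcont t ω (φ t (ω.1 t)) (φx t (ω.1 t)) (φxx t (ω.1 t)) ht htT.le
    (ε / 2) (half_pos hε)
  obtain ⟨δφ, hδφ, hφnear⟩ := exists_forall_finiteDifferences_near hφc hφt hφtc hφx hφxc hφxx
    hφxxc t (ω.1 t) (lt_min (half_pos hε) (by positivity : 0 < δG / 4))
  obtain ⟨δ, hδφ', hδG', hδ⟩ := ((eventually_add_mul_sqrt_lt lam hδφ).and <|
    (eventually_nhdsWithin_of_eventually_nhds <|
      eventually_lt_nhds (by positivity : 0 < δG / 4)).and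
      self_mem_nhdsWithin).exists
  refine ⟨δ, hδ, fun t' h c ω' htt' ht'T hh _ hsum xt dx hxt hdx => ?_⟩
  have hS := supNorm_nonneg T ω'.1
  have hc := abs_nonneg c
  have hxt' : |xt - ω.1 t| ≤ supNorm T ω'.1 := by
    rw [hxt, concat1_apply_of_le ht ω ω' htt', add_sub_cancel_left]
    exact abs_le_supNorm ω'.2.1 ⟨by linarith, by linarith⟩
  have hdx' : dx ≤ lam * √δ :=
    hdx ▸ mul_le_mul_of_nonneg_left (Real.sqrt_le_sqrt (by linarith)) hlam.le
  obtain ⟨hy, hslope, hz, hγ⟩ := hφnear t' xt h dx hh (hdx ▸ by positivity)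
    (by rw [abs_of_nonneg (sub_nonneg.2 htt')]; linarith)
  have hy' := abs_sub_le (φ t (ω.1 t)) (φ (t' + h) xt) (φ (t' + h) xt + c)
  rw [sub_add_cancel_left, abs_neg] at hy'
  have hGnear := hG t' (concat1 t ht ω ω') (φ (t' + h) xt + c) _ _ (ht.trans htt') ht'T.le (by
    have := supNorm_stopPath_sub_concat1_le (T := T) ht htt' ω ω'
    rw [abs_sub_comm, abs_of_nonneg (sub_nonneg.2 htt')]
    linarith [min_le_right (ε / 2) (δG / 4)])
  have hquot : ∀ a b g : ℝ, (a + c - (b + c + h * g)) / h = -((b - a) / h) - g := fun a b g => by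
    field_simp
    ring
  have htri : ∀ a b u v : ℝ, |(-a - u) - (-b - v)| ≤ |b - a| + |v - u| := fun a b u v =>
    (abs_add_le (b - a) (v - u)).trans_eq' (by congr 1; ring)
  rw [hquot]
  exact (htri _ _ _ _).trans (by linarith [min_le_left (ε / 2) (δG / 4)])

/-- consistency of the explicit finite-difference scheme: if `G` is
continuous for the Dupire pseudo-distance (in `(t,ω)`) and the Euclidean metric (in
`(y,z,γ)`), and `φ(t,x)` is `C^{1,2}`, then at every `(t,ω)` with `t < T` the
one-step difference quotient of the scheme applied to `φ + c` converges to
`−∂_tφ(t,ω_t) − G(t, ω, φ(t,ω_t), ∂_xφ(t,ω_t), ∂²_{xx}φ(t,ω_t))`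
as `(t'−t) + ‖ω'‖ + h + |c| → 0`. -/
theorem stmt_14 (T lam : ℝ) (hT : 0 < T) (hlam : 0 < lam)
    (G : ℝ → Path1 → ℝ → ℝ → ℝ → ℝ)
    -- continuity of `G` w.r.t. the Dupire pseudo-distance and the Euclidean metric:
    (hGcont : ∀ (t : ℝ) (ω : Path1) (y z γ : ℝ), 0 ≤ t → t ≤ T →
      ∀ ε > (0 : ℝ), ∃ δ > (0 : ℝ), ∀ (t' : ℝ) (ω' : Path1) (y' z' γ' : ℝ),
        0 ≤ t' → t' ≤ T →
        |t - t'| + (supNorm T fun s => ω.1 (min t s) - ω'.1 (min t' s))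
            + |y - y'| + |z - z'| + |γ - γ'| < δ →
        |G t ω y z γ - G t' ω' y' z' γ'| < ε)
    -- `φ` is `C^{1,2}`: continuous, with continuous partial derivatives `φt, φx, φxx`:
    (φ φt φx φxx : ℝ → ℝ → ℝ)
    (hφc : Continuous fun p : ℝ × ℝ => φ p.1 p.2)
    (hφt : ∀ t x, HasDerivAt (fun r => φ r x) (φt t x) t)
    (hφtc : Continuous fun p : ℝ × ℝ => φt p.1 p.2)
    (hφx : ∀ t x, HasDerivAt (fun r => φ t r) (φx t x) x)
    (hφxc : Continuous fun p : ℝ × ℝ => φx p.1 p.2)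
    (hφxx : ∀ t x, HasDerivAt (fun r => φx t r) (φxx t x) x)
    (hφxxc : Continuous fun p : ℝ × ℝ => φxx p.1 p.2)
    (t : ℝ) (ω : Path1) (ht : 0 ≤ t) (htT : t < T) :
    ∀ ε' > (0 : ℝ), ∃ δ > (0 : ℝ),
      ∀ (t' h c : ℝ) (ω' : Path1),
        t ≤ t' → t' < T → 0 < h → h ≤ T - t' →
        (t' - t) + supNorm T ω'.1 + h + |c| ≤ δ →
        -- with `ω̃ = ω ⊗_t ω'`, `x̃ = ω̃_{t'}`, `Δx = lam √h`:
        ∀ xt dx : ℝ, xt = (concat1 t ht ω ω').1 t' → dx = lam * Real.sqrt h →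
        |(φ t' xt + c
            - (φ (t' + h) xt + c
               + h * G t' (concat1 t ht ω ω') (φ (t' + h) xt + c)
                   ((φ (t' + h) (xt + dx) - φ (t' + h) xt) / dx)
                   ((φ (t' + h) (xt + dx) - 2 * φ (t' + h) xt + φ (t' + h) (xt - dx))
                     / dx ^ 2))) / h
          - (-(φt t (ω.1 t))
             - G t ω (φ t (ω.1 t)) (φx t (ω.1 t)) (φxx t (ω.1 t)))| ≤ ε' :=
  stmt_14_general T lam hlam G hGcont φ φt φx φxx hφc hφt hφtc hφx hφxc hφxx hφxxc t ω ht htT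
end
end

section
/- (Monotonicity of the explicit finite-difference operator.) In the finite-difference setting, there exists h₀ > 0 depending only on L, λ and ε such that for every h ∈ (0, h₀] with h ≤ T, every t ∈ [0, T−h], every ω ∈ Ω, and all bounded functions χ, χ' : Ω → ℝ with χ ≥ χ' pointwise on Ω, one has 𝕋^{t,ω}_h[χ] ≥ 𝕋^{t,ω}_h[χ']. -/
noncomputable section

/-!
Write `s = √h`, so that `Δx = λ s` and `h / Δx² = 1 / λ²`. By the mean value theorem in each of
`y, z, γ`, the difference `𝕋_h[χ] - 𝕋_h[χ']` equals, for some slopes `|p|, |q| ≤ L` and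
`ε ≤ r ≤ (1/2 - ε) λ²`, the combination
`(s q / λ + r / λ²) δ₊ + (1 + h p - s q / λ - 2 r / λ²) δ₀ + (r / λ²) δ₋`
of the increments `δ₊, δ₀, δ₋ ≥ 0` of `χ - χ'` at `ω ⊗ Δx`, `ω_{t∧·}`, `ω ⊗ (-Δx)`.
The lower bound `r ≥ ε` and the CFL bound `2 r / λ² ≤ 1 - 2ε` leave room of size `ε` in these
coefficients, which absorbs the terms of order `s L` once `s L (λ + 1/λ + 1) ≤ ε`.
-/

theorem exists_mem_sub_eq_mul_sub {f f' : ℝ → ℝ} {S : Set ℝ}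
    (hf : ∀ x, HasDerivAt f (f' x) x) (hS : ∀ x, f' x ∈ S) (x y : ℝ) :
    ∃ c ∈ S, f y - f x = c * (y - x) := by
  wlog hxy : x < y generalizing x y
  · rcases (not_lt.mp hxy).eq_or_lt with rfl | hyx
    · exact ⟨f' y, hS y, by ring⟩
    · obtain ⟨c, hc, hyx⟩ := this y x hyx
      exact ⟨c, hc, by linear_combination -hyx⟩
  obtain ⟨c, -, hc⟩ := exists_hasDerivAt_eq_slope f f' hxy
    (fun z _ => (hf z).continuousAt.continuousWithinAt) (fun z _ => hf z)
  exact ⟨f' c, hS c, by rw [hc, div_mul_cancel₀ _ (sub_ne_zero.2 hxy.ne')]⟩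

theorem exists_sub_eq_linear_of_hasDerivAt {F Fy Fz Fg : ℝ → ℝ → ℝ → ℝ} {Sy Sz Sg : Set ℝ}
    (hdy : ∀ y z γ, HasDerivAt (fun r => F r z γ) (Fy y z γ) y)
    (hdz : ∀ y z γ, HasDerivAt (fun r => F y r γ) (Fz y z γ) z)
    (hdg : ∀ y z γ, HasDerivAt (fun r => F y z r) (Fg y z γ) γ)
    (hSy : ∀ y z γ, Fy y z γ ∈ Sy) (hSz : ∀ y z γ, Fz y z γ ∈ Sz)
    (hSg : ∀ y z γ, Fg y z γ ∈ Sg) (y z γ y' z' γ' : ℝ) :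
    ∃ p ∈ Sy, ∃ q ∈ Sz, ∃ r ∈ Sg,
      F y z γ - F y' z' γ' = p * (y - y') + q * (z - z') + r * (γ - γ') := by
  obtain ⟨p, hp, hpy⟩ := exists_mem_sub_eq_mul_sub (hdy · z γ) (hSy · z γ) y' y
  obtain ⟨q, hq, hqz⟩ := exists_mem_sub_eq_mul_sub (hdz y' · γ) (hSz y' · γ) z' z
  obtain ⟨r, hr, hrg⟩ := exists_mem_sub_eq_mul_sub (hdg y' z' ·) (hSg y' z' ·) γ' γ
  exact ⟨p, hp, q, hq, r, hr, by linear_combination hpy + hqz + hrg⟩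

/-- One explicit step `b + h F(b, 𝒟¹, 𝒟²)` of the scheme, where `a, b, c` are the values of the
test function at `ω ⊗ Δx`, `ω_{t∧·}` and `ω ⊗ (-Δx)`. -/
def fdStep (F : ℝ → ℝ → ℝ → ℝ) (h dx a b c : ℝ) : ℝ :=
  b + h * F b ((a - b) / dx) ((a - 2 * b + c) / dx ^ 2)

section LinearStep

variable {L lam eps s p q r : ℝ}

theorem linearStep_eq (hlam : lam ≠ 0) (hs : s ≠ 0) (A B C : ℝ) :
    B + s ^ 2 * (p * B + q * ((A - B) / (lam * s)) + r * ((A - 2 * B + C) / (lam * s) ^ 2)) =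
      (s * q / lam + r / lam ^ 2) * A + (1 + s ^ 2 * p - s * q / lam - 2 * r / lam ^ 2) * B +
        r / lam ^ 2 * C := by
  field_simp
  ring

variable (hlam : 0 < lam) (hs : 0 < s) (hs1 : s ≤ 1)
  (hsmall : s * (L * (lam + 1 / lam + 1)) ≤ eps)
  (hp : |p| ≤ L) (hq : |q| ≤ L) (hr : eps ≤ r ∧ r ≤ (1 / 2 - eps) * lam ^ 2)
include hlam hs hsmall hq hr

theorem linearStep_coeffA_nonneg : 0 ≤ s * q / lam + r / lam ^ 2 := by
  have hL : 0 ≤ L := (abs_nonneg q).trans hq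
  have hlamL : s * L * lam ≤ eps := by
    have : 0 ≤ s * L * (1 / lam + 1) := by positivity
    linarith
  have hsq : -(s * L * lam) ≤ s * q * lam := by
    have := mul_le_mul_of_nonneg_left (neg_le_of_abs_le hq) (mul_pos hs hlam).le
    linarith
  have : s * q / lam + r / lam ^ 2 = (s * q * lam + r) / lam ^ 2 := by field_simp
  rw [this]
  exact div_nonneg (by linarith [hr.1]) (sq_nonneg lam)

include hs1 hp in
theorem linearStep_coeffB_nonneg : 0 ≤ 1 + s ^ 2 * p - s * q / lam - 2 * r / lam ^ 2 := by
  have hL : 0 ≤ L := (abs_nonneg q).trans hq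
  have hsp : -(s * L) ≤ s ^ 2 * p := by
    have h1 : -(s ^ 2 * L) ≤ s ^ 2 * p := by
      have := mul_le_mul_of_nonneg_left (neg_le_of_abs_le hp) (sq_nonneg s)
      linarith
    have h2 : s ^ 2 * L ≤ s * L := by
      have : s ^ 2 ≤ s := by nlinarith
      exact mul_le_mul_of_nonneg_right this hL
    linarith
  have hsq : s * q / lam ≤ s * L / lam := by
    gcongr
    exact le_of_abs_le hq
  have hr2 : 2 * r / lam ^ 2 ≤ 1 - 2 * eps := by
    rw [div_le_iff₀ (by positivity)]
    linarith [hr.2]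
  have hroom : s * L + s * L / lam ≤ eps := by
    have : 0 ≤ s * L * lam := by positivity
    have : s * (L * (lam + 1 / lam + 1)) = s * L * lam + (s * L + s * L / lam) := by ring
    linarith
  have heps : 0 ≤ eps := hsmall.trans' (by positivity)
  linarith

include hs1 hp in
theorem linearStep_nonneg {A B C : ℝ} (hA : 0 ≤ A) (hB : 0 ≤ B) (hC : 0 ≤ C) :
    0 ≤ B + s ^ 2 * (p * B + q * ((A - B) / (lam * s)) + r * ((A - 2 * B + C) / (lam * s) ^ 2)) := by
  rw [linearStep_eq hlam.ne' hs.ne']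
  have hL : 0 ≤ L := (abs_nonneg q).trans hq
  have heps : 0 ≤ eps := hsmall.trans' (by positivity)
  have : 0 ≤ r / lam ^ 2 := div_nonneg (heps.trans hr.1) (sq_nonneg lam)
  have := linearStep_coeffA_nonneg hlam hs hsmall hq hr
  have := linearStep_coeffB_nonneg hlam hs hs1 hsmall hp hq hr
  positivity

end LinearStep

theorem fdStep_mono {F Fy Fz Fg : ℝ → ℝ → ℝ → ℝ} {L lam eps h : ℝ}
    (hdy : ∀ y z γ, HasDerivAt (fun r => F r z γ) (Fy y z γ) y)
    (hdz : ∀ y z γ, HasDerivAt (fun r => F y r γ) (Fz y z γ) z)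
    (hdg : ∀ y z γ, HasDerivAt (fun r => F y z r) (Fg y z γ) γ)
    (hFy : ∀ y z γ, |Fy y z γ| ≤ L) (hFz : ∀ y z γ, |Fz y z γ| ≤ L)
    (hFg : ∀ y z γ, eps ≤ Fg y z γ ∧ Fg y z γ ≤ (1 / 2 - eps) * lam ^ 2)
    (hlam : 0 < lam) (hh : 0 < h) (hh1 : h ≤ 1)
    (hsmall : √h * (L * (lam + 1 / lam + 1)) ≤ eps)
    {a b c a' b' c' : ℝ} (ha : a' ≤ a) (hb : b' ≤ b) (hc : c' ≤ c) :
    fdStep F h (lam * √h) a' b' c' ≤ fdStep F h (lam * √h) a b c := by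
  set dx := lam * √h
  obtain ⟨p, hp, q, hq, r, hr, hF⟩ := exists_sub_eq_linear_of_hasDerivAt
    (Sy := {p | |p| ≤ L}) (Sz := {q | |q| ≤ L})
    (Sg := {r | eps ≤ r ∧ r ≤ (1 / 2 - eps) * lam ^ 2}) hdy hdz hdg hFy hFz hFg
    b ((a - b) / dx) ((a - 2 * b + c) / dx ^ 2) b' ((a' - b') / dx) ((a' - 2 * b' + c') / dx ^ 2)
  have key := linearStep_nonneg hlam (Real.sqrt_pos.2 hh) (Real.sqrt_le_one.2 hh1) hsmall hp hq hr
    (sub_nonneg.2 ha) (sub_nonneg.2 hb) (sub_nonneg.2 hc)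
  rw [Real.sq_sqrt hh.le] at key
  rw [← sub_nonneg]
  convert key using 1
  unfold fdStep
  linear_combination h * hF

theorem stmt_15_general (T L lam eps : ℝ) (hL : 0 ≤ L) (hlam : 0 < lam)
    (heps : eps ∈ Set.Ioo (0 : ℝ) (1 / 2))
    (G Gy Gz Gg : ℝ → Path1 → ℝ → ℝ → ℝ → ℝ)
    -- `G` is continuously differentiable in `(y,z,γ)` with partial derivatives `Gy, Gz, Gg`:
    (hdy : ∀ t ω y z γ, HasDerivAt (fun r => G t ω r z γ) (Gy t ω y z γ) y)
    (hdz : ∀ t ω y z γ, HasDerivAt (fun r => G t ω y r γ) (Gz t ω y z γ) z)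
    (hdg : ∀ t ω y z γ, HasDerivAt (fun r => G t ω y z r) (Gg t ω y z γ) γ)
    -- bounds on the partial derivatives, including the CFL condition:
    (hGyb : ∀ t ω y z γ, |Gy t ω y z γ| ≤ L)
    (hGzb : ∀ t ω y z γ, |Gz t ω y z γ| ≤ L)
    (hGgb : ∀ t ω y z γ, eps ≤ Gg t ω y z γ ∧ Gg t ω y z γ ≤ (1 / 2 - eps) * lam ^ 2) :
    ∃ h₀ > (0 : ℝ),
      ∀ hstep : ℝ, ∀ hh : 0 < hstep, hstep ≤ h₀ → hstep ≤ T →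
      ∀ t : ℝ, ∀ ht : 0 ≤ t, t ≤ T - hstep →
      ∀ ω : Path1, ∀ χ χ' : Path1 → ℝ,
        (∃ M, ∀ x, |χ x| ≤ M) → (∃ M, ∀ x, |χ' x| ≤ M) →
        (∀ ω'' : Path1, χ' ω'' ≤ χ ω'') →
        χ' (stopPath ω t ht)
            + hstep * G t ω (D0 χ' t ht ω)
                (D1 χ' t hstep (lam * Real.sqrt hstep) ht hh ω)
                (D2 χ' t hstep (lam * Real.sqrt hstep) ht hh ω)
          ≤ χ (stopPath ω t ht)
            + hstep * G t ω (D0 χ t ht ω)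
                (D1 χ t hstep (lam * Real.sqrt hstep) ht hh ω)
                (D2 χ t hstep (lam * Real.sqrt hstep) ht hh ω) := by
  set M := L * (lam + 1 / lam + 1)
  have hM : 0 ≤ M := by positivity
  have hbound : 0 ≤ eps / (1 + M) ∧ eps / (1 + M) ≤ 1 := by
    constructor
    · exact div_nonneg heps.1.le (by positivity)
    · rw [div_le_one (by positivity)]
      linarith [heps.2]
  refine ⟨(eps / (1 + M)) ^ 2, pow_pos (div_pos heps.1 (by positivity)) 2, ?_⟩
  intro h hh hh₀ _ t ht _ ω χ χ' _ _ hle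
  have hsmall : √h * M ≤ eps := by
    have hs : √h ≤ eps / (1 + M) := Real.sqrt_le_sqrt hh₀ |>.trans_eq (Real.sqrt_sq hbound.1)
    rw [le_div_iff₀ (by positivity)] at hs
    nlinarith [Real.sqrt_nonneg h]
  exact fdStep_mono (hdy t ω) (hdz t ω) (hdg t ω) (hGyb t ω) (hGzb t ω) (hGgb t ω) hlam hh
    (hh₀.trans (pow_le_one₀ hbound.1 hbound.2)) hsmall (hle _) (hle _) (hle _)

/-- monotonicity of the one-step explicit finite-difference operator
`𝕋^{t,ω}_h[χ] = χ(ω_{t∧·}) + h G(t,ω,𝒟⁰χ,𝒟¹χ,𝒟²χ)` (with `Δx = lam √h`): under the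
CFL condition there is `h₀ > 0`, depending only on `L, lam, eps`, such that for all
`h ∈ (0,h₀]` with `h ≤ T`, all `t ∈ [0,T−h]`, all `ω`, and all bounded `χ ≥ χ'`,
one has `𝕋^{t,ω}_h[χ] ≥ 𝕋^{t,ω}_h[χ']`. -/
theorem stmt_15 (T L lam eps : ℝ) (hT : 0 < T) (hL : 0 ≤ L) (hlam : 0 < lam)
    (heps : eps ∈ Set.Ioo (0 : ℝ) (1 / 2))
    (G Gy Gz Gg : ℝ → Path1 → ℝ → ℝ → ℝ → ℝ)
    -- `G` is continuously differentiable in `(y,z,γ)` with partial derivatives `Gy, Gz, Gg`: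
    (hdy : ∀ t ω y z γ, HasDerivAt (fun r => G t ω r z γ) (Gy t ω y z γ) y)
    (hdz : ∀ t ω y z γ, HasDerivAt (fun r => G t ω y r γ) (Gz t ω y z γ) z)
    (hdg : ∀ t ω y z γ, HasDerivAt (fun r => G t ω y z r) (Gg t ω y z γ) γ)
    (hdcont : ∀ t ω, Continuous fun p : ℝ × ℝ × ℝ =>
      (Gy t ω p.1 p.2.1 p.2.2, Gz t ω p.1 p.2.1 p.2.2, Gg t ω p.1 p.2.1 p.2.2))
    -- bounds on the partial derivatives, including the CFL condition:
    (hGyb : ∀ t ω y z γ, |Gy t ω y z γ| ≤ L)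
    (hGzb : ∀ t ω y z γ, |Gz t ω y z γ| ≤ L)
    (hGgb : ∀ t ω y z γ, eps ≤ Gg t ω y z γ ∧ Gg t ω y z γ ≤ (1 / 2 - eps) * lam ^ 2) :
    ∃ h₀ > (0 : ℝ),
      ∀ hstep : ℝ, ∀ hh : 0 < hstep, hstep ≤ h₀ → hstep ≤ T →
      ∀ t : ℝ, ∀ ht : 0 ≤ t, t ≤ T - hstep →
      ∀ ω : Path1, ∀ χ χ' : Path1 → ℝ,
        (∃ M, ∀ x, |χ x| ≤ M) → (∃ M, ∀ x, |χ' x| ≤ M) →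
        (∀ ω'' : Path1, χ' ω'' ≤ χ ω'') →
        χ' (stopPath ω t ht)
            + hstep * G t ω (D0 χ' t ht ω)
                (D1 χ' t hstep (lam * Real.sqrt hstep) ht hh ω)
                (D2 χ' t hstep (lam * Real.sqrt hstep) ht hh ω)
          ≤ χ (stopPath ω t ht)
            + hstep * G t ω (D0 χ t ht ω)
                (D1 χ t hstep (lam * Real.sqrt hstep) ht hh ω)
                (D2 χ t hstep (lam * Real.sqrt hstep) ht hh ω) :=
  stmt_15_general T L lam eps hL hlam heps G Gy Gz Gg hdy hdz hdg hGyb hGzb hGgb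
end
end
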